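/- arXiv:1208.4656 — 5 statements merged into one kernel-verified Lean document; each statement's English description precedes it below -/
import Mathlib

section
/- Let r, t be positive integers, Σ an r×t real rectangular diagonal matrix with nonnegative diagonal entries, D a t×t real diagonal matrix with nonnegative diagonal entries d₁₁,…,d_{tt}, and ε > 0. Then for every complex r×t matrix Δ with spectral norm ‖Δ‖₂ ≤ ε, the determinant det[I_t + (Σ+Δ)ᴴ(Σ+Δ)D] is a positive real number and satisfies det[I_t + (Σ+Δ)ᴴ(Σ+Δ)D] ≥ ∏_{j=1}^{min(t,r)} (1 + max{ςⱼⱼ − ε, 0}² dⱼⱼ). -/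
open Matrix

/-- The spectral norm (ℓ²→ℓ² operator norm, i.e. largest singular value) of a complex matrix. -/
noncomputable def specNorm {m n : ℕ} (A : Matrix (Fin m) (Fin n) ℂ) : ℝ :=
  ‖LinearMap.toContinuousLinearMap (Matrix.toEuclideanLin A)‖

/-- The `j`-th diagonal entry of a rectangular matrix, extended by `0` out of range. -/
noncomputable def diagEntry {r t : ℕ} (S : Matrix (Fin r) (Fin t) ℝ) (j : ℕ) : ℝ :=
  if h : j < r ∧ j < t then S ⟨j, h.1⟩ ⟨j, h.2⟩ else 0

/-!
Put `M = Σ + Δ` and `N = M D^{1/2}`, so that the determinant is `det (I + Nᴴ N)`, the determinant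
of a positive definite matrix. Since `‖Δ‖₂ ≤ ε`, every `y` satisfies
`‖ς ⊙ y‖ = ‖Σ y‖ ≤ ‖M y‖ + ε ‖y‖`. Induct on the number of columns, deleting a column `j₀` on
which `ς` is smallest, so that `‖ς ⊙ u‖ ≥ ς_{j₀} ‖u‖`. By Cramer's rule, `det (I + Nᴴ N)` is
the determinant with row and column `j₀` deleted times `‖y‖² + ‖N y‖²` for some `y` with
`y j₀ = 1`. The inequality above, applied to `u = D^{1/2} y`, whose `j₀`-th entry is `√d_{j₀}`,
gives `‖N y‖ = ‖M u‖ ≥ (ς_{j₀} - ε)₊ √d_{j₀}`.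
-/

open WithLp
open scoped ComplexOrder

theorem Fintype.apply_sum_of_support_subsingleton {ι M N : Type*} [Fintype ι] [AddCommMonoid M]
    [AddCommMonoid N] {f : ι → M} (hf : (Function.support f).Subsingleton) (φ : M → N)
    (hφ : φ 0 = 0) : φ (∑ a, f a) = ∑ a, φ (f a) := by
  obtain h | ⟨a, ha⟩ := hf.eq_empty_or_singleton
  · simp [Function.support_eq_empty_iff.1 h, hφ]
  · have hb : ∀ b, b ≠ a → f b = 0 := fun b hb => Function.notMem_support.1 (ha ▸ hb)
    rw [Fintype.sum_eq_single a hb, Fintype.sum_eq_single a fun b hb' => by rw [hb b hb', hφ]]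

theorem Fin.prod_castLE_eq_prod {M : Type*} [CommMonoid M] {m n : ℕ} (h : m ≤ n)
    (f : Fin n → M) (hf : ∀ j : Fin n, m ≤ j → f j = 1) :
    ∏ j : Fin m, f (Fin.castLE h j) = ∏ j, f j := by
  obtain ⟨b, rfl⟩ := Nat.exists_eq_add_of_le h
  exact (Fin.prod_trunc f fun j => hf _ (Nat.le_add_right _ _)).symm

namespace Matrix

theorem exists_det_eq_det_submatrix_succAbove_mul {K : Type*} [Field K] [StarRing K] {n : ℕ}
    (A : Matrix (Fin (n + 1)) (Fin (n + 1)) K) (i : Fin (n + 1))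
    (hA : (A.submatrix i.succAbove i.succAbove).det ≠ 0) :
    ∃ y : Fin (n + 1) → K, y i = 1 ∧
      A.det = (A.submatrix i.succAbove i.succAbove).det * (star y ⬝ᵥ A *ᵥ y) := by
  set a := (A.submatrix i.succAbove i.succAbove).det
  -- the `i`-th column of the adjugate solves `A x = det A • eᵢ`, and its `i`-th entry is `a`
  set x := adjugate A *ᵥ Pi.single i 1
  have hxi : x i = a := by
    simp [x, adjugate_fin_succ_eq_det_submatrix, ← two_mul, pow_mul, a]
  have hAx : A *ᵥ x = A.det • Pi.single i 1 := by
    rw [mulVec_mulVec, mul_adjugate, smul_mulVec, one_mulVec]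
  have hy : (a⁻¹ • x) i = 1 := by rw [Pi.smul_apply, hxi, smul_eq_mul, inv_mul_cancel₀ hA]
  refine ⟨a⁻¹ • x, hy, ?_⟩
  rw [mulVec_smul, hAx, smul_smul, dotProduct_smul, dotProduct_single, Pi.star_apply, hy,
    star_one, one_mul, smul_eq_mul, mul_one, mul_inv_cancel_left₀ hA]

theorem star_dotProduct_self_eq_norm_sq {𝕜 n : Type*} [RCLike 𝕜] [Fintype n] (v : n → 𝕜) :
    star v ⬝ᵥ v = ((‖toLp 2 v‖ ^ 2 : ℝ) : 𝕜) := by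
  rw [dotProduct_comm, ← EuclideanSpace.inner_toLp_toLp, inner_self_eq_norm_sq_to_K]
  push_cast; rfl

theorem star_dotProduct_one_add_conjTranspose_mul_self_mulVec {𝕜 m n : Type*} [RCLike 𝕜]
    [Fintype m] [Fintype n] [DecidableEq n] (N : Matrix m n 𝕜) (y : n → 𝕜) :
    star y ⬝ᵥ (1 + Nᴴ * N) *ᵥ y = ((‖toLp 2 y‖ ^ 2 + ‖toLp 2 (N *ᵥ y)‖ ^ 2 : ℝ) : 𝕜) := by
  rw [add_mulVec, one_mulVec, ← mulVec_mulVec, dotProduct_add, dotProduct_mulVec, ← star_mulVec,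
    star_dotProduct_self_eq_norm_sq, star_dotProduct_self_eq_norm_sq]
  push_cast; rfl

theorem posDef_one_add_conjTranspose_mul_self {𝕜 m n : Type*} [RCLike 𝕜] [Fintype m] [Fintype n]
    [DecidableEq n] (N : Matrix m n 𝕜) : (1 + Nᴴ * N).PosDef :=
  PosDef.one.add_posSemidef (posSemidef_conjTranspose_mul_self N)

end Matrix

noncomputable def diagonalSqrt {n : Type*} [DecidableEq n] (d : n → ℝ) : Matrix n n ℂ :=
  diagonal fun j => (√(d j) : ℂ)

theorem det_one_add_conjTranspose_mul_self_mul_diagonal {m n : Type*} [Fintype m] [Fintype n]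
    [DecidableEq n] (M : Matrix m n ℂ) {d : n → ℝ} (hd : ∀ j, 0 ≤ d j) :
    (1 + Mᴴ * M * diagonal fun j => (d j : ℂ)).det =
      (1 + (M * diagonalSqrt d)ᴴ * (M * diagonalSqrt d)).det := by
  set S := diagonalSqrt d
  have hS : Sᴴ = S := by simp [S, diagonalSqrt, diagonal_conjTranspose, Complex.conj_ofReal]
  have hSS : S * S = diagonal fun j => (d j : ℂ) := by
    simp [S, diagonalSqrt, diagonal_mul_diagonal, ← Complex.ofReal_mul, Real.mul_self_sqrt (hd _)]
  rw [conjTranspose_mul, hS, Matrix.mul_assoc S, ← Matrix.mul_assoc Mᴴ,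
    det_one_add_mul_comm S, Matrix.mul_assoc _ S, hSS]

theorem norm_toLp_mulVec_le_specNorm {m n : ℕ} (A : Matrix (Fin m) (Fin n) ℂ) (y : Fin n → ℂ) :
    ‖toLp 2 (A *ᵥ y)‖ ≤ specNorm A * ‖toLp 2 y‖ :=
  (LinearMap.toContinuousLinearMap (toEuclideanLin A)).le_opNorm (toLp 2 y)

theorem norm_toLp_eq_norm_toLp_comp_succAbove {𝕜 : Type*} [RCLike 𝕜] {n : ℕ}
    (v : Fin (n + 1) → 𝕜) {i : Fin (n + 1)} (hv : v i = 0) :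
    ‖toLp 2 v‖ = ‖toLp 2 (v ∘ i.succAbove)‖ := by
  rw [← sq_eq_sq₀ (norm_nonneg _) (norm_nonneg _), EuclideanSpace.norm_sq_eq,
    EuclideanSpace.norm_sq_eq, Fin.sum_univ_succAbove _ i]
  simp [hv]

theorem mul_norm_toLp_le_of_forall_le {n : Type*} [Fintype n] (ς : n → ℝ) (u : n → ℂ) {j₀ : n}
    (hj₀ : ∀ j, ς j₀ ≤ ς j) : ς j₀ * ‖toLp 2 u‖ ≤ ‖toLp 2 (fun j => (ς j : ℂ) * u j)‖ := by
  rcases le_or_gt (ς j₀) 0 with hneg | hpos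
  · exact (mul_nonpos_of_nonpos_of_nonneg hneg (norm_nonneg _)).trans (norm_nonneg _)
  rw [← pow_le_pow_iff_left₀ (by positivity) (norm_nonneg _) two_ne_zero, mul_pow,
    EuclideanSpace.norm_sq_eq, EuclideanSpace.norm_sq_eq, Finset.mul_sum]
  gcongr with j
  simp only [norm_mul, Complex.norm_real, Real.norm_eq_abs, mul_pow, sq_abs]
  gcongr
  exact hj₀ j

def AlmostDominates {m n : Type*} [Fintype m] [Fintype n] (M : Matrix m n ℂ) (ς : n → ℝ)
    (ε : ℝ) : Prop :=
  ∀ y : n → ℂ, ‖toLp 2 (fun j => (ς j : ℂ) * y j)‖ ≤ ‖toLp 2 (M *ᵥ y)‖ + ε * ‖toLp 2 y‖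

namespace AlmostDominates

variable {m n : Type*} [Fintype m] [Fintype n] {M : Matrix m n ℂ} {ς : n → ℝ} {ε : ℝ}

theorem of_add {S Δ : Matrix m n ℂ}
    (hS : ∀ y, ‖toLp 2 (S *ᵥ y)‖ = ‖toLp 2 (fun j => (ς j : ℂ) * y j)‖)
    (hΔ : ∀ y, ‖toLp 2 (Δ *ᵥ y)‖ ≤ ε * ‖toLp 2 y‖) : AlmostDominates (S + Δ) ς ε := by
  intro y
  rw [← hS]
  calc ‖toLp 2 (S *ᵥ y)‖ = ‖toLp 2 ((S + Δ) *ᵥ y) - toLp 2 (Δ *ᵥ y)‖ := by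
        rw [← toLp_sub, add_mulVec, add_sub_cancel_right]
    _ ≤ _ := by linarith [norm_sub_le (toLp 2 ((S + Δ) *ᵥ y)) (toLp 2 (Δ *ᵥ y)), hΔ y]

theorem max_mul_norm_le (hM : AlmostDominates M ς ε) {j₀ : n} (hj₀ : ∀ j, ς j₀ ≤ ς j)
    (u : n → ℂ) : max (ς j₀ - ε) 0 * ‖toLp 2 u‖ ≤ ‖toLp 2 (M *ᵥ u)‖ := by
  rw [max_mul_of_nonneg _ _ (norm_nonneg _), zero_mul]
  refine max_le ?_ (norm_nonneg _)
  linarith [mul_norm_toLp_le_of_forall_le ς u hj₀, hM u]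

theorem one_add_max_sq_mul_le [DecidableEq n] (hM : AlmostDominates M ς ε) {j₀ : n}
    (hj₀ : ∀ j, ς j₀ ≤ ς j) {d : n → ℝ} (hd : ∀ j, 0 ≤ d j) {y : n → ℂ} (hy : y j₀ = 1) :
    1 + max (ς j₀ - ε) 0 ^ 2 * d j₀ ≤
      ‖toLp 2 y‖ ^ 2 + ‖toLp 2 ((M * diagonalSqrt d) *ᵥ y)‖ ^ 2 := by
  set u := diagonalSqrt d *ᵥ y
  have hy1 : 1 ≤ ‖toLp 2 y‖ := by simpa [hy] using PiLp.norm_apply_le (toLp 2 y) j₀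
  have hu : √(d j₀) ≤ ‖toLp 2 u‖ := by
    simpa [u, diagonalSqrt, mulVec_diagonal, hy, abs_of_nonneg (Real.sqrt_nonneg _)] using
      PiLp.norm_apply_le (toLp 2 u) j₀
  have hMu : max (ς j₀ - ε) 0 * √(d j₀) ≤ ‖toLp 2 (M *ᵥ u)‖ :=
    (mul_le_mul_of_nonneg_left hu (le_max_right _ _)).trans (hM.max_mul_norm_le hj₀ u)
  have := pow_le_pow_left₀ (by positivity) hMu 2
  rw [mul_pow, Real.sq_sqrt (hd j₀)] at this
  rw [← mulVec_mulVec]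
  nlinarith [one_le_pow₀ (n := 2) hy1]

theorem submatrix_succAbove {k : ℕ} {M : Matrix m (Fin (k + 1)) ℂ} {ς : Fin (k + 1) → ℝ}
    (hM : AlmostDominates M ς ε) (i : Fin (k + 1)) :
    AlmostDominates (M.submatrix id i.succAbove) (ς ∘ i.succAbove) ε := by
  intro y
  have hMy : M.submatrix id i.succAbove *ᵥ y = M *ᵥ i.insertNth 0 y := by
    ext; simp [mulVec, dotProduct, Fin.sum_univ_succAbove _ i]
  have hςy : (fun j => (ς j : ℂ) * (i.insertNth 0 y : Fin (k + 1) → ℂ) j) ∘ i.succAbove =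
      fun j => ((ς ∘ i.succAbove) j : ℂ) * y j := by
    ext; simp
  have h := hM (i.insertNth 0 y)
  rwa [norm_toLp_eq_norm_toLp_comp_succAbove _ (i := i) (by simp), hςy,
    norm_toLp_eq_norm_toLp_comp_succAbove (i.insertNth 0 y) (i := i) (by simp),
    Fin.insertNth_comp_succAbove, ← hMy] at h

theorem prod_le_re_det {r k : ℕ} {M : Matrix (Fin r) (Fin k) ℂ} {ς : Fin k → ℝ}
    {ε : ℝ} (hM : AlmostDominates M ς ε) {d : Fin k → ℝ} (hd : ∀ j, 0 ≤ d j) :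
    ∏ j, (1 + max (ς j - ε) 0 ^ 2 * d j) ≤
      (1 + (M * diagonalSqrt d)ᴴ * (M * diagonalSqrt d)).det.re := by
  induction k with
  | zero => simp
  | succ k ih =>
    obtain ⟨j₀, hj₀⟩ := Finite.exists_min ς
    set N := M * diagonalSqrt d
    set N' := M.submatrix id j₀.succAbove * diagonalSqrt (d ∘ j₀.succAbove)
    have hsub : (1 + Nᴴ * N).submatrix j₀.succAbove j₀.succAbove = 1 + N'ᴴ * N' := by
      have hN' : N' = N.submatrix id j₀.succAbove := by
        ext; simp [N, N', diagonalSqrt, mul_diagonal]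
      rw [hN']
      ext i j
      simp [one_apply, mul_apply]
    have hpos := (posDef_one_add_conjTranspose_mul_self N').det_pos
    obtain ⟨y, hy, hdet⟩ :=
      exists_det_eq_det_submatrix_succAbove_mul (1 + Nᴴ * N) j₀ (hsub ▸ hpos.ne')
    rw [hsub, star_dotProduct_one_add_conjTranspose_mul_self_mulVec] at hdet
    rw [Fin.prod_univ_succAbove _ j₀, hdet, ← RCLike.re_to_complex, RCLike.re_mul_ofReal,
      RCLike.re_to_complex, mul_comm (1 + _)]
    exact mul_le_mul (ih (hM.submatrix_succAbove j₀) fun j => hd _)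
      (hM.one_add_max_sq_mul_le hj₀ hd hy)
      (add_nonneg zero_le_one (mul_nonneg (sq_nonneg _) (hd j₀))) (Complex.pos_iff.1 hpos).1.le

end AlmostDominates

section RectangularDiagonal

variable {r t : ℕ} {S : Matrix (Fin r) (Fin t) ℝ}

theorem diagEntry_eq_sum (hS : ∀ (i : Fin r) (j : Fin t), (i : ℕ) ≠ j → S i j = 0) (j : Fin t) :
    diagEntry S j = ∑ i, S i j := by
  unfold diagEntry
  split_ifs with h
  · rw [Fintype.sum_eq_single ⟨j, h.1⟩ fun i hi => hS i j fun hij => hi (Fin.ext hij)]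
  · exact (Fintype.sum_eq_zero _ fun i => hS i j fun hij => h ⟨hij ▸ i.isLt, j.isLt⟩).symm

theorem norm_toLp_map_mulVec_of_rectDiag
    (hS : ∀ (i : Fin r) (j : Fin t), (i : ℕ) ≠ j → S i j = 0) (y : Fin t → ℂ) :
    ‖toLp 2 (S.map Complex.ofReal *ᵥ y)‖ =
      ‖toLp 2 (fun j : Fin t => (diagEntry S j : ℂ) * y j)‖ := by
  set g : Fin r → Fin t → ℂ := fun i j => S i j * y j
  have hg {i j} (h : g i j ≠ 0) : (i : ℕ) = j := by
    by_contra hij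
    exact h (by simp [g, hS i j hij])
  have hrow i : (Function.support (g i)).Subsingleton := fun a ha b hb =>
    Fin.ext ((hg ha).symm.trans (hg hb))
  have hcol j : (Function.support (g · j)).Subsingleton := fun a ha b hb =>
    Fin.ext ((hg ha).trans (hg hb).symm)
  rw [← sq_eq_sq₀ (norm_nonneg _) (norm_nonneg _), EuclideanSpace.norm_sq_eq,
    EuclideanSpace.norm_sq_eq]
  calc ∑ i, ‖(S.map Complex.ofReal *ᵥ y) i‖ ^ 2 = ∑ i, ∑ j, ‖g i j‖ ^ 2 :=
        Finset.sum_congr rfl fun i _ =>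
          Fintype.apply_sum_of_support_subsingleton (hrow i) (‖·‖ ^ 2) (by simp)
    _ = ∑ j, ∑ i, ‖g i j‖ ^ 2 := Finset.sum_comm
    _ = ∑ j : Fin t, ‖(diagEntry S j : ℂ) * y j‖ ^ 2 := Finset.sum_congr rfl fun j _ => by
        rw [diagEntry_eq_sum hS, Complex.ofReal_sum, Finset.sum_mul]
        exact (Fintype.apply_sum_of_support_subsingleton (hcol j) (‖·‖ ^ 2) (by simp)).symm

end RectangularDiagonal

theorem stmt1_general (r t : ℕ)
    (Sig : Matrix (Fin r) (Fin t) ℝ)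
    (hSdiag : ∀ (i : Fin r) (j : Fin t), (i : ℕ) ≠ (j : ℕ) → Sig i j = 0)
    (d : Fin t → ℝ) (hd : ∀ i, 0 ≤ d i)
    (ε : ℝ) (hε : 0 < ε)
    (Δ : Matrix (Fin r) (Fin t) ℂ) (hΔ : specNorm Δ ≤ ε) :
    let SigC : Matrix (Fin r) (Fin t) ℂ := Sig.map Complex.ofReal
    let D : Matrix (Fin t) (Fin t) ℂ := Matrix.diagonal fun i => (d i : ℂ)
    0 < ((1 + (SigC + Δ)ᴴ * (SigC + Δ) * D).det).re ∧
    ((1 + (SigC + Δ)ᴴ * (SigC + Δ) * D).det).im = 0 ∧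
    (∏ j : Fin (min r t),
        (1 + max (diagEntry Sig j - ε) 0 ^ 2 * d (Fin.castLE (min_le_right r t) j))) ≤
      ((1 + (SigC + Δ)ᴴ * (SigC + Δ) * D).det).re := by
  intro SigC D
  have hM : AlmostDominates (SigC + Δ) (fun j => diagEntry Sig j) ε :=
    .of_add (norm_toLp_map_mulVec_of_rectDiag hSdiag) fun y =>
      (norm_toLp_mulVec_le_specNorm Δ y).trans (mul_le_mul_of_nonneg_right hΔ (norm_nonneg _))
  have hdet : (1 + (SigC + Δ)ᴴ * (SigC + Δ) * D).det = _ :=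
    det_one_add_conjTranspose_mul_self_mul_diagonal (SigC + Δ) hd
  obtain ⟨hre, him⟩ := Complex.pos_iff.1
    (posDef_one_add_conjTranspose_mul_self ((SigC + Δ) * diagonalSqrt d)).det_pos
  have hpad (j : Fin t) (hj : min r t ≤ j) : 1 + max (diagEntry Sig j - ε) 0 ^ 2 * d j = 1 := by
    rw [diagEntry, dif_neg (by omega), zero_sub, max_eq_right (by linarith)]
    ring
  rw [hdet]
  exact ⟨hre, him.symm, (Fin.prod_castLE_eq_prod _ _ hpad).trans_le (hM.prod_le_re_det hd)⟩

theorem stmt1 (r t : ℕ) (hr : 0 < r) (ht : 0 < t)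
    (Sig : Matrix (Fin r) (Fin t) ℝ)
    (hSdiag : ∀ (i : Fin r) (j : Fin t), (i : ℕ) ≠ (j : ℕ) → Sig i j = 0)
    (hSpos : ∀ j, 0 ≤ diagEntry Sig j)
    (d : Fin t → ℝ) (hd : ∀ i, 0 ≤ d i)
    (ε : ℝ) (hε : 0 < ε)
    (Δ : Matrix (Fin r) (Fin t) ℂ) (hΔ : specNorm Δ ≤ ε) :
    let SigC : Matrix (Fin r) (Fin t) ℂ := Sig.map Complex.ofReal
    let D : Matrix (Fin t) (Fin t) ℂ := Matrix.diagonal fun i => (d i : ℂ)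
    0 < ((1 + (SigC + Δ)ᴴ * (SigC + Δ) * D).det).re ∧
    ((1 + (SigC + Δ)ᴴ * (SigC + Δ) * D).det).im = 0 ∧
    (∏ j : Fin (min r t),
        (1 + max (diagEntry Sig j - ε) 0 ^ 2 * d (Fin.castLE (min_le_right r t) j))) ≤
      ((1 + (SigC + Δ)ᴴ * (SigC + Δ) * D).det).re :=
  stmt1_general r t Sig hSdiag d hd ε hε Δ hΔ
end

section
/- Let r, t be positive integers, Σ an r×t real rectangular diagonal matrix with nonnegative diagonal entries, D a t×t real diagonal matrix with nonnegative diagonal entries d₁₁,…,d_{tt}, and ε > 0. Define the r×t real rectangular diagonal matrix Δ* with diagonal entries Δ*ⱼⱼ = max{ςⱼⱼ − ε, 0} − ςⱼⱼ for j = 1,…,min(r,t). Then ‖Δ*‖₂ ≤ ε and det[I_t + (Σ+Δ*)ᴴ(Σ+Δ*)D] = ∏_{j=1}^{min(t,r)} (1 + max{ςⱼⱼ − ε, 0}² dⱼⱼ). -/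
/-! Both `Δ*` and `Σ + Δ*` are rectangular diagonal, and for a rectangular diagonal `A` the Gram
matrix `Aᴴ * A` is the `t × t` diagonal matrix of the `|a_jj|²` (zero for `j ≥ r`). The
C*-identity `‖A‖² = ‖Aᴴ * A‖` therefore reduces the norm bound to the entrywise bound
`|max (ς - ε) 0 - ς| ≤ ε` for `ς ≥ 0`, and `1 + Aᴴ * A * D` is diagonal, so its determinant is the
product of its diagonal entries, those with `j ≥ r` being `1`. -/

open Matrix

open scoped Matrix.Norms.L2Operator

namespace Matrix

def rectDiagonal {α : Type*} [Zero α] (r t : ℕ) (v : ℕ → α) : Matrix (Fin r) (Fin t) α :=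
  of fun i j => if (i : ℕ) = j then v i else 0

section rectDiagonal

variable {α : Type*} {r t : ℕ}

theorem rectDiagonal_conjTranspose_mul_self [NonUnitalNonAssocSemiring α] [StarAddMonoid α]
    (v : ℕ → α) :
    (rectDiagonal r t v)ᴴ * rectDiagonal r t v =
      diagonal fun j : Fin t => if (j : ℕ) < r then star (v j) * v j else 0 := by
  ext j k
  simp only [mul_apply, conjTranspose_apply, rectDiagonal, of_apply, diagonal_apply]
  split_ifs with hjk hjr
  · subst hjk
    rw [Finset.sum_eq_single ⟨j, hjr⟩] <;> simp +contextual [Fin.ext_iff]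
  · subst hjk
    exact Finset.sum_eq_zero fun i _ => by simp [show (i : ℕ) ≠ j by omega]
  · refine Finset.sum_eq_zero fun i _ => ?_
    split_ifs with hij hik <;> simp_all [Fin.ext_iff]

theorem det_one_add_rectDiagonal_conjTranspose_mul_self_mul_diagonal
    [CommRing α] [StarRing α] (v : ℕ → α) (d : Fin t → α) :
    (1 + (rectDiagonal r t v)ᴴ * rectDiagonal r t v * diagonal d).det =
      ∏ j : Fin (min r t), (1 + star (v j) * v j * d (Fin.castLE (min_le_right r t) j)) := by
  rw [rectDiagonal_conjTranspose_mul_self, diagonal_mul_diagonal, ← diagonal_one,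
    diagonal_add, det_diagonal]
  refine (Fintype.prod_of_injective (Fin.castLE (min_le_right r t)) (Fin.castLE_injective _)
    _ _ (fun j hj => ?_) (fun j => ?_)).symm
  · have hjr : ¬ (j : ℕ) < r := fun hjr => hj ⟨⟨j, lt_min hjr j.isLt⟩, rfl⟩
    simp [hjr]
  · simp [lt_of_lt_of_le j.isLt (min_le_left r t)]

theorem l2_opNorm_rectDiagonal_le [RCLike α] (v : ℕ → α) {c : ℝ} (hc : 0 ≤ c)
    (hv : ∀ n, ‖v n‖ ≤ c) : ‖rectDiagonal r t v‖ ≤ c := by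
  have hsq : ‖rectDiagonal r t v‖ * ‖rectDiagonal r t v‖ ≤ c * c := by
    rw [← l2_opNorm_conjTranspose_mul_self, rectDiagonal_conjTranspose_mul_self,
      l2_opNorm_diagonal]
    refine pi_norm_le_iff_of_nonneg (by positivity) |>.mpr fun j => ?_
    split_ifs
    · rw [norm_mul, norm_star]
      exact mul_le_mul (hv j) (hv j) (norm_nonneg _) hc
    · simpa using mul_nonneg hc hc
  nlinarith [norm_nonneg (rectDiagonal r t v)]

end rectDiagonal

end Matrix

theorem specNorm_eq_l2_opNorm {m n : ℕ} (A : Matrix (Fin m) (Fin n) ℂ) : specNorm A = ‖A‖ := rfl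

theorem diagEntry_eq_of_val_eq {r t : ℕ} (S : Matrix (Fin r) (Fin t) ℝ) {i : Fin r} {j : Fin t}
    (h : (i : ℕ) = j) : diagEntry S j = S i j := by
  rw [diagEntry, dif_pos ⟨h ▸ i.isLt, j.isLt⟩]
  congr 1
  exact Fin.ext h.symm

theorem abs_max_sub_sub_le {s ε : ℝ} (hs : 0 ≤ s) (hε : 0 ≤ ε) : |max (s - ε) 0 - s| ≤ ε := by
  rw [abs_le]
  constructor <;> linarith [le_max_left (s - ε) 0, max_le (by linarith : s - ε ≤ s) hs]

theorem stmt2_general (r t : ℕ)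
    (Sig : Matrix (Fin r) (Fin t) ℝ)
    (hSdiag : ∀ (i : Fin r) (j : Fin t), (i : ℕ) ≠ (j : ℕ) → Sig i j = 0)
    (hSpos : ∀ j, 0 ≤ diagEntry Sig j)
    (d : Fin t → ℝ)
    (ε : ℝ) (hε : 0 < ε) :
    -- Δ* : the rectangular diagonal matrix with entries max{ς_jj − ε, 0} − ς_jj
    let Δstar : Matrix (Fin r) (Fin t) ℂ := fun (i : Fin r) (j : Fin t) =>
      if (i : ℕ) = (j : ℕ) then ((max (Sig i j - ε) 0 - Sig i j : ℝ) : ℂ) else 0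
    let SigC : Matrix (Fin r) (Fin t) ℂ := Sig.map Complex.ofReal
    let D : Matrix (Fin t) (Fin t) ℂ := Matrix.diagonal fun i => (d i : ℂ)
    specNorm Δstar ≤ ε ∧
    (1 + (SigC + Δstar)ᴴ * (SigC + Δstar) * D).det =
      ((∏ j : Fin (min r t),
        (1 + max (diagEntry Sig j - ε) 0 ^ 2 * d (Fin.castLE (min_le_right r t) j)) : ℝ) : ℂ) := by
  intro Δstar SigC D
  have hΔ : Δstar = rectDiagonal r t fun n =>
      ((max (diagEntry Sig n - ε) 0 - diagEntry Sig n : ℝ) : ℂ) := by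
    ext i j
    by_cases hij : (i : ℕ) = j
    · simp [Δstar, rectDiagonal, hij, diagEntry_eq_of_val_eq Sig hij]
    · simp [Δstar, rectDiagonal, hij]
  have hB : SigC + Δstar = rectDiagonal r t fun n => ((max (diagEntry Sig n - ε) 0 : ℝ) : ℂ) := by
    rw [hΔ]
    ext i j
    by_cases hij : (i : ℕ) = j
    · simp [SigC, rectDiagonal, hij, diagEntry_eq_of_val_eq Sig hij]
    · simp [SigC, rectDiagonal, hij, hSdiag i j hij]
  constructor
  · rw [specNorm_eq_l2_opNorm, hΔ]
    exact l2_opNorm_rectDiagonal_le _ hε.le fun n =>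
      (Complex.norm_real _).trans_le (abs_max_sub_sub_le (hSpos n) hε.le)
  · rw [hB, det_one_add_rectDiagonal_conjTranspose_mul_self_mul_diagonal]
    push_cast
    simp [sq]

theorem stmt2 (r t : ℕ) (hr : 0 < r) (ht : 0 < t)
    (Sig : Matrix (Fin r) (Fin t) ℝ)
    (hSdiag : ∀ (i : Fin r) (j : Fin t), (i : ℕ) ≠ (j : ℕ) → Sig i j = 0)
    (hSpos : ∀ j, 0 ≤ diagEntry Sig j)
    (d : Fin t → ℝ) (hd : ∀ i, 0 ≤ d i)
    (ε : ℝ) (hε : 0 < ε) :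
    -- Δ* : the rectangular diagonal matrix with entries max{ς_jj − ε, 0} − ς_jj
    let Δstar : Matrix (Fin r) (Fin t) ℂ := fun (i : Fin r) (j : Fin t) =>
      if (i : ℕ) = (j : ℕ) then ((max (Sig i j - ε) 0 - Sig i j : ℝ) : ℂ) else 0
    let SigC : Matrix (Fin r) (Fin t) ℂ := Sig.map Complex.ofReal
    let D : Matrix (Fin t) (Fin t) ℂ := Matrix.diagonal fun i => (d i : ℂ)
    specNorm Δstar ≤ ε ∧
    (1 + (SigC + Δstar)ᴴ * (SigC + Δstar) * D).det =
      ((∏ j : Fin (min r t),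
        (1 + max (diagEntry Sig j - ε) 0 ^ 2 * d (Fin.castLE (min_le_right r t) j)) : ℝ) : ℂ) :=
  stmt2_general r t Sig hSdiag hSpos d ε hε
end

section
/- Let r, t be positive integers, Σ an r×t real rectangular diagonal matrix with nonnegative diagonal entries, and ε > 0. Then for every complex r×t matrix Δ with spectral norm ‖Δ‖₂ ≤ ε, the (nonnegative real) determinant of the t×t positive semidefinite matrix (Σ+Δ)ᴴ(Σ+Δ) satisfies det[(Σ+Δ)ᴴ(Σ+Δ)] ≥ ∏_{j=1}^{t} max{ςⱼⱼ − ε, 0}², where ςⱼⱼ := 0 for min(r,t) < j ≤ t. -/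
open Matrix

open InnerProductSpace

/-!
Sort the columns so that the diagonal entries `ς` of `Σ` decrease. The Gram determinant
`det (AᴴA)` of the columns of `A = Σ + Δ` is the product of the squared norms of their
Gram–Schmidt vectors, and the `j`-th Gram–Schmidt vector is `A x` for a coefficient vector `x`
with `x j = 1` supported on the first `j` sorted columns. On such `x` the diagonal matrix `Σ`
stretches by at least `ς j`, so `‖A x‖ ≥ ‖Σ x‖ - ‖Δ x‖ ≥ (ς j - ε) ‖x‖ ≥ ς j - ε`.
-/

section Gram

variable {𝕜 E : Type*} [RCLike 𝕜] [NormedAddCommGroup E] [InnerProductSpace 𝕜 E]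

theorem Matrix.gram_sum_smul {ι κ : Type*} [Fintype ι] (g : ι → E) (M : Matrix ι κ 𝕜) :
    gram 𝕜 (fun j => ∑ i, M i j • g i) = Mᴴ * gram 𝕜 g * M := by
  ext a b
  simp only [gram_apply, sum_inner, inner_sum, inner_smul_left, inner_smul_right, mul_apply,
    Finset.sum_mul, Finset.mul_sum, conjTranspose_apply, RCLike.star_def]
  exact Finset.sum_congr rfl fun _ _ => Finset.sum_congr rfl fun _ _ => by ring

theorem Matrix.gram_eq_diagonal_of_orthogonal {ι : Type*} [DecidableEq ι] {g : ι → E}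
    (hg : Pairwise fun i j => ⟪g i, g j⟫_𝕜 = 0) :
    gram 𝕜 g = diagonal fun i => (‖g i‖ : 𝕜) ^ 2 := by
  ext i j
  rcases eq_or_ne i j with rfl | hij
  · simp [gram_apply, inner_self_eq_norm_sq_to_K]
  · simp [gram_apply, hg hij, hij]

namespace InnerProductSpace

variable (𝕜)
variable {ι : Type*} [LinearOrder ι] [Fintype ι] [LocallyFiniteOrderBot ι]

noncomputable def gramSchmidtCoeff (f : ι → E) : Matrix ι ι 𝕜 :=
  of fun i j => if i = j then 1 else if i < j then
    ⟪gramSchmidt 𝕜 f i, f j⟫_𝕜 / (‖gramSchmidt 𝕜 f i‖ : 𝕜) ^ 2 else 0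

theorem sum_gramSchmidtCoeff_smul (f : ι → E) (j : ι) :
    ∑ i, gramSchmidtCoeff 𝕜 f i j • gramSchmidt 𝕜 f i = f j := by
  classical
  rw [← Finset.add_sum_erase _ _ (Finset.mem_univ j), gramSchmidt_def'' 𝕜 f j]
  congr 1
  · simp [gramSchmidtCoeff]
  · refine (Finset.sum_subset (fun i hi => ?_) fun i _ hi => ?_).symm.trans
      (Finset.sum_congr rfl fun i hi => ?_)
    · simpa using (Finset.mem_Iio.1 hi).ne
    · simp_all [gramSchmidtCoeff]
    · simp [gramSchmidtCoeff, (Finset.mem_Iio.1 hi).ne, Finset.mem_Iio.1 hi]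

theorem det_gramSchmidtCoeff (f : ι → E) : (gramSchmidtCoeff 𝕜 f).det = 1 := by
  rw [det_of_isUpperTriangular fun i j (hji : j < i) => by
    simp [gramSchmidtCoeff, hji.ne', hji.not_gt]]
  simp [gramSchmidtCoeff]

theorem det_gram_eq_prod_norm_gramSchmidt_sq (f : ι → E) :
    (gram 𝕜 f).det = ∏ i, (‖gramSchmidt 𝕜 f i‖ : 𝕜) ^ 2 := by
  classical
  have hf : f = fun j => ∑ i, gramSchmidtCoeff 𝕜 f i j • gramSchmidt 𝕜 f i :=
    funext fun j => (sum_gramSchmidtCoeff_smul 𝕜 f j).symm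
  rw [hf, gram_sum_smul, ← hf, gram_eq_diagonal_of_orthogonal fun i j =>
    gramSchmidt_orthogonal 𝕜 f, det_mul, det_mul, det_conjTranspose, det_gramSchmidtCoeff,
    det_diagonal]
  simp

theorem exists_gramSchmidt_eq_sum_smul (f : ι → E) (j : ι) :
    ∃ x : ι → 𝕜, x j = 1 ∧ (∀ k, j < k → x k = 0) ∧ gramSchmidt 𝕜 f j = ∑ k, x k • f k := by
  classical
  have hmem : f j - gramSchmidt 𝕜 f j ∈ Submodule.span 𝕜 (f '' Set.Iio j) := by
    rw [← span_gramSchmidt_Iio, gramSchmidt_def, sub_sub_cancel]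
    refine Submodule.sum_mem _ fun i hi => ?_
    rw [Submodule.starProjection_singleton]
    exact Submodule.smul_mem _ _ (Submodule.subset_span ⟨i, Finset.mem_Iio.1 hi, rfl⟩)
  obtain ⟨l, hl, hlf⟩ := (Finsupp.mem_span_image_iff_linearCombination 𝕜).1 hmem
  have hl_eq_zero : ∀ k, ¬k < j → l k = 0 := fun k hk =>
    by_contra fun h => hk (hl (Finsupp.mem_support_iff.2 h))
  refine ⟨Pi.single j 1 - ⇑l, by simp [hl_eq_zero j (lt_irrefl j)],
    fun k hk => by simp [hk.ne', hl_eq_zero k hk.not_gt], ?_⟩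
  rw [Finsupp.linearCombination_apply, Finsupp.sum_fintype _ _ (by simp)] at hlf
  simp [sub_smul, Finset.sum_sub_distrib, Pi.single_apply, hlf]

end InnerProductSpace

end Gram

section Columns

variable {𝕜 : Type*} [RCLike 𝕜] {m n : Type*}

def Matrix.euclideanCol (A : Matrix m n 𝕜) (j : n) : EuclideanSpace 𝕜 m :=
  WithLp.toLp 2 fun i => A i j

theorem Matrix.gram_euclideanCol [Fintype m] [DecidableEq m] (A : Matrix m n 𝕜) :
    gram 𝕜 A.euclideanCol = Aᴴ * A := by
  rw [gram_eq_conjTranspose_mul (EuclideanSpace.basisFun m 𝕜)]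
  rfl

theorem Matrix.sum_smul_euclideanCol [Fintype n] [DecidableEq n] (A : Matrix m n 𝕜)
    (x : n → 𝕜) :
    ∑ k, x k • A.euclideanCol k = toEuclideanLin A (WithLp.toLp 2 x) := by
  ext i
  simp [euclideanCol, mulVec, dotProduct, mul_comm]

theorem Matrix.det_conjTranspose_mul_self_submatrix_id [Fintype m] [Fintype n] [DecidableEq n]
    (A : Matrix m n 𝕜) (σ : Equiv.Perm n) :
    ((A.submatrix id σ)ᴴ * A.submatrix id σ).det = (Aᴴ * A).det := by
  rw [conjTranspose_submatrix, ← det_submatrix_equiv_self σ (Aᴴ * A)]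
  exact congrArg det (submatrix_mul_equiv Aᴴ A σ (Equiv.refl _) σ)

theorem Matrix.toEuclideanLin_submatrix_id_toLp [Fintype n] [DecidableEq n]
    (A : Matrix m n 𝕜) (σ : Equiv.Perm n) (x : n → 𝕜) :
    toEuclideanLin (A.submatrix id σ) (WithLp.toLp 2 x)
      = toEuclideanLin A (WithLp.toLp 2 (x ∘ σ.symm)) := by
  rw [toLpLin_toLp, toLpLin_toLp, toLin'_apply, toLin'_apply, submatrix_mulVec_equiv]
  rfl

end Columns

section LowerBound

variable {𝕜 : Type*} [RCLike 𝕜] {m ι : Type*} [Fintype m] [LinearOrder ι] [Fintype ι]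
  [LocallyFiniteOrderBot ι]

theorem Matrix.det_conjTranspose_mul_self_eq_prod_norm_gramSchmidt_sq [DecidableEq m] (A : Matrix m ι 𝕜) :
    (Aᴴ * A).det = ((∏ j, ‖gramSchmidt 𝕜 A.euclideanCol j‖ ^ 2 : ℝ) : 𝕜) := by
  rw [← gram_euclideanCol, det_gram_eq_prod_norm_gramSchmidt_sq]
  push_cast
  rfl

theorem le_norm_gramSchmidt_euclideanCol (A : Matrix m ι 𝕜) {j : ι} {b : ℝ}
    (hb : ∀ x : ι → 𝕜, x j = 1 → (∀ k, j < k → x k = 0) →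
      b ≤ ‖toEuclideanLin A (WithLp.toLp 2 x)‖) :
    b ≤ ‖gramSchmidt 𝕜 A.euclideanCol j‖ := by
  obtain ⟨x, hxj, hx, hg⟩ := exists_gramSchmidt_eq_sum_smul 𝕜 A.euclideanCol j
  rw [hg, sum_smul_euclideanCol]
  exact hb x hxj hx

end LowerBound

section DiagonalGram

variable {m n : Type*} [Fintype m] [DecidableEq m] [Fintype n] [DecidableEq n]

theorem norm_toEuclideanLin_sq_of_conjTranspose_mul_self_eq_diagonal {𝕜 : Type*} [RCLike 𝕜]
    {S : Matrix m n 𝕜} {d : n → ℝ} (hS : Sᴴ * S = diagonal fun k => (d k : 𝕜))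
    (x : EuclideanSpace 𝕜 n) :
    ‖toEuclideanLin S x‖ ^ 2 = ∑ k, d k * ‖x k‖ ^ 2 := by
  rw [@norm_sq_eq_re_inner 𝕜, ← LinearMap.adjoint_inner_right,
    ← toEuclideanLin_conjTranspose_eq_adjoint]
  have hcomp : toEuclideanLin Sᴴ (toEuclideanLin S x) = toEuclideanLin (Sᴴ * S) x := by
    ext i
    simp [mulVec_mulVec]
  rw [hcomp, hS]
  simp only [toLpLin_apply, mulVec_diagonal, PiLp.inner_apply, RCLike.inner_apply,
    map_sum]
  refine Finset.sum_congr rfl fun k _ => ?_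
  rw [mul_assoc, RCLike.mul_conj, ← RCLike.ofReal_pow, ← RCLike.ofReal_mul, RCLike.ofReal_re]

theorem mul_norm_le_norm_toEuclideanLin {𝕜 : Type*} [RCLike 𝕜] {S : Matrix m n 𝕜} {s : n → ℝ}
    (hS : Sᴴ * S = diagonal fun k => ((s k ^ 2 : ℝ) : 𝕜)) {c : ℝ} (hc : 0 ≤ c)
    {x : EuclideanSpace 𝕜 n} (hx : ∀ k, x k ≠ 0 → c ≤ s k) :
    c * ‖x‖ ≤ ‖toEuclideanLin S x‖ := by
  rw [← sq_le_sq₀ (by positivity) (norm_nonneg _),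
    norm_toEuclideanLin_sq_of_conjTranspose_mul_self_eq_diagonal hS, mul_pow,
    EuclideanSpace.norm_sq_eq, Finset.mul_sum]
  refine Finset.sum_le_sum fun k _ => ?_
  by_cases hk : x k = 0
  · simp [hk]
  · exact mul_le_mul_of_nonneg_right (pow_le_pow_left₀ hc (hx k hk) 2) (sq_nonneg _)

end DiagonalGram

theorem norm_toEuclideanLin_le_specNorm_mul {r t : ℕ} (A : Matrix (Fin r) (Fin t) ℂ)
    (x : EuclideanSpace ℂ (Fin t)) : ‖toEuclideanLin A x‖ ≤ specNorm A * ‖x‖ :=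
  (LinearMap.toContinuousLinearMap (toEuclideanLin A)).le_opNorm x

theorem max_sub_le_norm_toEuclideanLin_add {r t : ℕ} {S Δ : Matrix (Fin r) (Fin t) ℂ}
    {s : Fin t → ℝ} (hS : Sᴴ * S = diagonal fun k => ((s k ^ 2 : ℝ) : ℂ)) {c ε : ℝ}
    (hc : 0 ≤ c) (hΔ : specNorm Δ ≤ ε) {x : EuclideanSpace ℂ (Fin t)} {k₀ : Fin t}
    (hk₀ : x k₀ = 1) (hx : ∀ k, x k ≠ 0 → c ≤ s k) :
    max (c - ε) 0 ≤ ‖toEuclideanLin (S + Δ) x‖ := by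
  refine max_le ?_ (norm_nonneg _)
  have hx1 : 1 ≤ ‖x‖ := by simpa [hk₀] using PiLp.norm_apply_le x k₀
  have hSx := mul_norm_le_norm_toEuclideanLin hS hc hx
  have hΔx := (norm_toEuclideanLin_le_specNorm_mul Δ x).trans
    (mul_le_mul_of_nonneg_right hΔ (norm_nonneg x))
  have htri : ‖toEuclideanLin S x‖ ≤ ‖toEuclideanLin (S + Δ) x‖ + ‖toEuclideanLin Δ x‖ := by
    simpa using norm_sub_le (toEuclideanLin (S + Δ) x) (toEuclideanLin Δ x)
  rcases le_or_gt (c - ε) 0 with hcε | hcε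
  · exact hcε.trans (norm_nonneg _)
  · nlinarith

theorem transpose_mul_self_eq_diagonal_diagEntry {r t : ℕ} (S : Matrix (Fin r) (Fin t) ℝ)
    (hS : ∀ (i : Fin r) (j : Fin t), (i : ℕ) ≠ (j : ℕ) → S i j = 0) :
    Sᵀ * S = diagonal fun k : Fin t => diagEntry S k ^ 2 := by
  ext k l
  rw [mul_apply, diagonal_apply]
  split_ifs with hkl
  · subst hkl
    by_cases hk : (k : ℕ) < r
    · rw [Finset.sum_eq_single ⟨k, hk⟩ (fun i _ hi => by
        simp [hS i k fun h => hi (Fin.ext h)]) (by simp)]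
      simp [diagEntry, hk, sq]
    · simp [diagEntry, hk, hS _ k fun h => hk (h ▸ Fin.isLt _)]
  · refine Finset.sum_eq_zero fun i _ => ?_
    by_cases hik : (i : ℕ) = k
    · simp [hS i l fun h => hkl (Fin.ext (hik.symm.trans h))]
    · simp [hS i k hik]

theorem conjTranspose_mul_self_map_ofReal_eq_diagonal {r t : ℕ} (S : Matrix (Fin r) (Fin t) ℝ)
    (hS : ∀ (i : Fin r) (j : Fin t), (i : ℕ) ≠ (j : ℕ) → S i j = 0) :
    (S.map Complex.ofReal)ᴴ * S.map Complex.ofReal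
      = diagonal fun k : Fin t => ((diagEntry S k ^ 2 : ℝ) : ℂ) := by
  rw [← conjTranspose_map _ fun _ => (Complex.conj_ofReal _).symm,
    conjTranspose_eq_transpose_of_trivial]
  change Sᵀ.map Complex.ofRealHom * S.map Complex.ofRealHom = _
  rw [← Matrix.map_mul, transpose_mul_self_eq_diagonal_diagEntry S hS, diagonal_map (map_zero _)]
  rfl

theorem stmt3_general (r t : ℕ)
    (Sig : Matrix (Fin r) (Fin t) ℝ)
    (hSdiag : ∀ (i : Fin r) (j : Fin t), (i : ℕ) ≠ (j : ℕ) → Sig i j = 0)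
    (hSpos : ∀ j, 0 ≤ diagEntry Sig j)
    (ε : ℝ)
    (Δ : Matrix (Fin r) (Fin t) ℂ) (hΔ : specNorm Δ ≤ ε) :
    let SigC : Matrix (Fin r) (Fin t) ℂ := Sig.map Complex.ofReal
    0 ≤ (((SigC + Δ)ᴴ * (SigC + Δ)).det).re ∧
    (((SigC + Δ)ᴴ * (SigC + Δ)).det).im = 0 ∧
    (∏ j : Fin t, max (diagEntry Sig j - ε) 0 ^ 2) ≤ (((SigC + Δ)ᴴ * (SigC + Δ)).det).re := by
  intro SigC
  set ς : Fin t → ℝ := fun j => diagEntry Sig j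
  set σ := Tuple.sort fun j => -ς j
  have hσ : ∀ {i j}, i ≤ j → ς (σ j) ≤ ς (σ i) := fun hij =>
    neg_le_neg_iff.1 (Tuple.monotone_sort (fun j => -ς j) hij)
  set B := (SigC + Δ).submatrix id σ
  have hdet : ((SigC + Δ)ᴴ * (SigC + Δ)).det
      = ((∏ j, ‖gramSchmidt ℂ B.euclideanCol j‖ ^ 2 : ℝ) : ℂ) := by
    rw [← det_conjTranspose_mul_self_submatrix_id _ σ]
    exact det_conjTranspose_mul_self_eq_prod_norm_gramSchmidt_sq B
  have hbound : ∀ j, max (ς (σ j) - ε) 0 ≤ ‖gramSchmidt ℂ B.euclideanCol j‖ := by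
    refine fun j => le_norm_gramSchmidt_euclideanCol B fun x hxj hx => ?_
    rw [toEuclideanLin_submatrix_id_toLp]
    refine max_sub_le_norm_toEuclideanLin_add
      (conjTranspose_mul_self_map_ofReal_eq_diagonal Sig hSdiag) (hSpos _) hΔ (k₀ := σ j)
      (by simpa using hxj) fun k hk => ?_
    have hle : σ.symm k ≤ j := not_lt.1 fun hlt => hk (by simpa using hx _ hlt)
    simpa using hσ hle
  refine ⟨by rw [hdet, Complex.ofReal_re]; positivity, by rw [hdet, Complex.ofReal_im], ?_⟩
  rw [hdet, Complex.ofReal_re, ← Equiv.prod_comp σ]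
  exact Finset.prod_le_prod (fun _ _ => by positivity) fun j _ =>
    pow_le_pow_left₀ (le_max_right _ _) (hbound j) 2

theorem stmt3 (r t : ℕ) (hr : 0 < r) (ht : 0 < t)
    (Sig : Matrix (Fin r) (Fin t) ℝ)
    (hSdiag : ∀ (i : Fin r) (j : Fin t), (i : ℕ) ≠ (j : ℕ) → Sig i j = 0)
    (hSpos : ∀ j, 0 ≤ diagEntry Sig j)
    (ε : ℝ) (hε : 0 < ε)
    (Δ : Matrix (Fin r) (Fin t) ℂ) (hΔ : specNorm Δ ≤ ε) :
    let SigC : Matrix (Fin r) (Fin t) ℂ := Sig.map Complex.ofReal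
    0 ≤ (((SigC + Δ)ᴴ * (SigC + Δ)).det).re ∧
    (((SigC + Δ)ᴴ * (SigC + Δ)).det).im = 0 ∧
    (∏ j : Fin t, max (diagEntry Sig j - ε) 0 ^ 2) ≤ (((SigC + Δ)ᴴ * (SigC + Δ)).det).re :=
  stmt3_general r t Sig hSdiag hSpos ε Δ hΔ
end

section
/- Let r, t be positive integers, Σ an r×t real rectangular diagonal matrix with nonnegative diagonal entries, ε > 0, and Δ a complex r×t matrix with spectral norm ‖Δ‖₂ ≤ ε. For any subset S of {1,…,min(r,t)}, let Σ(S) and Δ(S) denote the |S|×|S| submatrices of Σ and Δ obtained by keeping exactly the rows and columns whose indices lie in S. Then det[ (Σ(S) + Δ(S))ᴴ (Σ(S) + Δ(S)) ] ≥ ∏_{j∈S} max{ςⱼⱼ − ε, 0}². -/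
open Matrix

open Finset Module RCLike
open scoped InnerProductSpace Matrix.Norms.L2Operator

/-! Write the submatrix as `M = D + E` with `D = diagonal d` and `‖E‖ ≤ ε`. For a threshold
`c > 0`, on the span of the coordinate vectors `e_j` with `|d_j| ≥ √c + ε` we have
`‖M w‖ ≥ (√c + ε - ‖E‖) ‖w‖ ≥ √c ‖w‖`; comparing dimensions with the span of the eigenvectors of
`MᴴM` with eigenvalue `< c` shows that `MᴴM` has no more eigenvalues below `c` than there are `j`
with `max (|d_j| - ε) 0 ^ 2 < c`. As this holds for every `c`, the sorted eigenvalues dominate the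
sorted numbers `max (|d_j| - ε) 0 ^ 2` termwise, and `det (MᴴM)` is the product of the
eigenvalues. -/

theorem Monotone.le_of_card_filter_lt_le {n : ℕ} {a l : Fin n → ℝ} (ha : Monotone a)
    (hl : Monotone l) (h : ∀ c, #{i | l i < c} ≤ #{i | a i < c}) (k : Fin n) : a k ≤ l k := by
  by_contra! hk
  have below_l : Iic k ⊆ ({i | l i < a k} : Finset _) := fun i hi ↦
    mem_filter.2 ⟨mem_univ _, (hl (mem_Iic.1 hi)).trans_lt hk⟩
  have below_a : ({i | a i < a k} : Finset _) ⊆ Iio k := fun i hi ↦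
    mem_Iio.2 (lt_of_not_ge fun hki ↦ (ha hki).not_gt (mem_filter.1 hi).2)
  have := (card_le_card below_l).trans ((h _).trans (card_le_card below_a))
  rw [Fin.card_Iic, Fin.card_Iio] at this
  omega

theorem Finset.card_filter_comp_equiv {ι κ : Type*} [Fintype ι] [Fintype κ] (e : κ ≃ ι)
    (p : ι → Prop) [DecidablePred p] : #{k | p (e k)} = #{i | p i} := by
  simp only [← Fintype.card_subtype]
  exact Fintype.card_congr (e.subtypeEquiv fun _ ↦ Iff.rfl)

theorem Finset.prod_le_prod_of_card_filter_lt_le {ι : Type*} [Fintype ι] {a l : ι → ℝ}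
    (ha : ∀ i, 0 ≤ a i) (h : ∀ c, #{i | l i < c} ≤ #{i | a i < c}) : ∏ i, a i ≤ ∏ i, l i := by
  set e := (Fintype.equivFin ι).symm
  set σa := (Tuple.sort (a ∘ e)).trans e
  set σl := (Tuple.sort (l ∘ e)).trans e
  have hle : ∀ k, a (σa k) ≤ l (σl k) :=
    Monotone.le_of_card_filter_lt_le (Tuple.monotone_sort (a ∘ e)) (Tuple.monotone_sort (l ∘ e))
      fun c ↦ (card_filter_comp_equiv σl (l · < c)).trans_le
        ((h c).trans (card_filter_comp_equiv σa (a · < c)).ge)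
  rw [← σa.prod_comp, ← σl.prod_comp]
  exact prod_le_prod (fun _ _ ↦ ha _) fun k _ ↦ hle k

namespace Matrix.IsHermitian

variable {𝕜 : Type*} [RCLike 𝕜] {n : Type*} [Fintype n] [DecidableEq n] {A : Matrix n n 𝕜}

theorem inner_eigenvectorBasis_toEuclideanLin (hA : A.IsHermitian) (i : n)
    (y : EuclideanSpace 𝕜 n) :
    ⟪hA.eigenvectorBasis i, toEuclideanLin A y⟫_𝕜 =
      hA.eigenvalues i * ⟪hA.eigenvectorBasis i, y⟫_𝕜 := by
  have hb : toEuclideanLin A (hA.eigenvectorBasis i) =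
      (hA.eigenvalues i : 𝕜) • hA.eigenvectorBasis i := by
    rw [toLpLin_apply, hA.mulVec_eigenvectorBasis, RCLike.real_smul_eq_coe_smul (K := 𝕜)]
    rfl
  rw [← isSymmetric_toEuclideanLin_iff.mpr hA, hb, inner_smul_left, conj_ofReal]

theorem re_inner_toEuclideanLin_self (hA : A.IsHermitian) (y : EuclideanSpace 𝕜 n) :
    re ⟪y, toEuclideanLin A y⟫_𝕜 =
      ∑ i, hA.eigenvalues i * ‖⟪hA.eigenvectorBasis i, y⟫_𝕜‖ ^ 2 := by
  rw [← hA.eigenvectorBasis.sum_inner_mul_inner, map_sum]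
  refine sum_congr rfl fun i _ ↦ ?_
  rw [inner_eigenvectorBasis_toEuclideanLin, ← inner_conj_symm, mul_left_comm, RCLike.conj_mul]
  norm_cast

theorem card_eigenvalues_lt_add_finrank_le (hA : A.IsHermitian) {c : ℝ}
    (W : Submodule 𝕜 (EuclideanSpace 𝕜 n))
    (hW : ∀ w ∈ W, c * ‖w‖ ^ 2 ≤ re ⟪w, toEuclideanLin A w⟫_𝕜) :
    #{i | hA.eigenvalues i < c} + finrank 𝕜 W ≤ Fintype.card n := by
  set b := hA.eigenvectorBasis
  by_contra! hlt
  let ψ : W →ₗ[𝕜] ({i // ¬ hA.eigenvalues i < c} → 𝕜) :=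
    LinearMap.pi fun i ↦ innerₛₗ 𝕜 (b i) ∘ₗ W.subtype
  have hdim : finrank 𝕜 ({i // ¬ hA.eigenvalues i < c} → 𝕜) < finrank 𝕜 W := by
    rw [Module.finrank_fintype_fun_eq_card, Fintype.card_subtype]
    have := card_filter_add_card_filter_not (s := univ) (fun i ↦ hA.eigenvalues i < c)
    rw [card_univ] at this
    omega
  obtain ⟨⟨y, hyW⟩, hψy, hy0⟩ :=
    Submodule.exists_mem_ne_zero_of_ne_bot (ψ.ker_ne_bot_of_finrank_lt hdim)
  have hy_high : ∀ i, ¬ hA.eigenvalues i < c → ⟪b i, y⟫_𝕜 = 0 := fun i hi ↦ congrFun hψy ⟨i, hi⟩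
  obtain ⟨i₀, hi₀⟩ : ∃ i, ⟪b i, y⟫_𝕜 ≠ 0 := by
    by_contra! h
    exact hy0 (Subtype.ext (b.toBasis.ext_elem fun i ↦ by simp [b.repr_apply_apply, h]))
  have hlt : ∑ i, hA.eigenvalues i * ‖⟪b i, y⟫_𝕜‖ ^ 2 < ∑ i, c * ‖⟪b i, y⟫_𝕜‖ ^ 2 := by
    refine sum_lt_sum (fun i _ ↦ ?_) ⟨i₀, mem_univ _, ?_⟩
    · by_cases hi : hA.eigenvalues i < c
      · exact mul_le_mul_of_nonneg_right hi.le (by positivity)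
      · simp [hy_high i hi]
    · have : hA.eigenvalues i₀ < c := by_contra fun hi ↦ hi₀ (hy_high i₀ hi)
      exact mul_lt_mul_of_pos_right this (by positivity)
  rw [← mul_sum, b.sum_sq_norm_inner_right, ← re_inner_toEuclideanLin_self] at hlt
  exact (hW y hyW).not_gt hlt

end Matrix.IsHermitian

namespace Matrix

variable {𝕜 : Type*} [RCLike 𝕜] {l m n : Type*} [Fintype l] [DecidableEq l] [Fintype m]
  [DecidableEq m] [Fintype n] [DecidableEq n]

theorem l2_opNorm_one_submatrix_le {g : l → m} (hg : Function.Injective g) :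
    ‖(1 : Matrix m m 𝕜).submatrix id g‖ ≤ 1 := by
  have hiso : ((1 : Matrix m m 𝕜).submatrix id g)ᴴ * (1 : Matrix m m 𝕜).submatrix id g = 1 := by
    rw [conjTranspose_submatrix, conjTranspose_one,
      ← submatrix_mul _ _ _ _ _ Function.bijective_id, Matrix.mul_one, submatrix_one _ hg]
  have hone : ‖(1 : Matrix l l 𝕜)‖ ≤ 1 := by
    rw [← l2_opNorm_toEuclideanCLM, map_one]
    exact ContinuousLinearMap.norm_id_le
  rw [← hiso, l2_opNorm_conjTranspose_mul_self] at hone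
  nlinarith [norm_nonneg ((1 : Matrix m m 𝕜).submatrix id g)]

theorem l2_opNorm_submatrix_le {k : Type*} [Fintype k] [DecidableEq k] (A : Matrix m n 𝕜)
    {f : l → m} {g : k → n} (hf : Function.Injective f) (hg : Function.Injective g) :
    ‖A.submatrix f g‖ ≤ ‖A‖ := by
  have hfactor : A.submatrix f g =
      ((1 : Matrix m m 𝕜).submatrix id f)ᴴ * A * (1 : Matrix n n 𝕜).submatrix id g := by
    ext i j
    simp [mul_apply, one_apply]
  calc ‖A.submatrix f g‖
      ≤ ‖((1 : Matrix m m 𝕜).submatrix id f)ᴴ‖ * ‖A‖ * ‖(1 : Matrix n n 𝕜).submatrix id g‖ := by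
        rw [hfactor]
        exact (l2_opNorm_mul _ _).trans
          (mul_le_mul_of_nonneg_right (l2_opNorm_mul _ _) (norm_nonneg _))
    _ ≤ 1 * ‖A‖ * 1 := by
        rw [l2_opNorm_conjTranspose]
        gcongr
        exacts [l2_opNorm_one_submatrix_le hf, l2_opNorm_one_submatrix_le hg]
    _ = ‖A‖ := by ring

theorem mul_norm_le_norm_toEuclideanLin_diagonal {d : n → 𝕜} {δ : ℝ} (hδ : 0 ≤ δ)
    {w : EuclideanSpace 𝕜 n} (hw : ∀ j, w j ≠ 0 → δ ≤ ‖d j‖) :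
    δ * ‖w‖ ≤ ‖toEuclideanLin (diagonal d) w‖ := by
  refine le_of_sq_le_sq ?_ (norm_nonneg _)
  rw [mul_pow, EuclideanSpace.norm_sq_eq, EuclideanSpace.norm_sq_eq, mul_sum]
  refine sum_le_sum fun j _ ↦ ?_
  rw [toLpLin_apply]
  simp only [mulVec_diagonal, norm_mul, mul_pow]
  by_cases hj : w j = 0
  · simp [hj]
  · gcongr
    exact hw j hj

theorem sub_mul_norm_le_norm_toEuclideanLin_diagonal_add {d : n → 𝕜} (E : Matrix n n 𝕜) {δ : ℝ}
    (hδ : 0 ≤ δ) {w : EuclideanSpace 𝕜 n} (hw : ∀ j, w j ≠ 0 → δ ≤ ‖d j‖) :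
    (δ - ‖E‖) * ‖w‖ ≤ ‖toEuclideanLin (diagonal d + E) w‖ := by
  have hD := mul_norm_le_norm_toEuclideanLin_diagonal hδ hw
  have hE : ‖toEuclideanLin E w‖ ≤ ‖E‖ * ‖w‖ := E.l2_opNorm_mulVec w
  have htri := norm_sub_norm_le (toEuclideanLin (diagonal d) w) (-toEuclideanLin E w)
  rw [map_add, LinearMap.add_apply]
  simp only [sub_neg_eq_add, norm_neg] at htri
  linarith

theorem re_inner_toEuclideanLin_conjTranspose_mul_self (M : Matrix n n 𝕜)
    (w : EuclideanSpace 𝕜 n) :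
    re ⟪w, toEuclideanLin (Mᴴ * M) w⟫_𝕜 = ‖toEuclideanLin M w‖ ^ 2 := by
  rw [toLpLin_mul_same, toEuclideanLin_conjTranspose_eq_adjoint, LinearMap.comp_apply,
    LinearMap.adjoint_inner_right, inner_self_eq_norm_sq]

theorem card_eigenvalues_conjTranspose_mul_self_lt_le (d : n → 𝕜) {E : Matrix n n 𝕜} {ε : ℝ}
    (hE : ‖E‖ ≤ ε) (c : ℝ) :
    #{i | (isHermitian_conjTranspose_mul_self (diagonal d + E)).eigenvalues i < c} ≤
      #{j | max (‖d j‖ - ε) 0 ^ 2 < c} := by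
  set M := diagonal d + E
  set hM := isHermitian_conjTranspose_mul_self M
  rcases le_or_gt c 0 with hc | hc
  · have : ({i | hM.eigenvalues i < c} : Finset n) = ∅ := filter_eq_empty_iff.2 fun i _ ↦
      not_lt.2 (hc.trans (eigenvalues_conjTranspose_mul_self_nonneg M i))
    simp [this]
  have hsmall : ∀ j, max (‖d j‖ - ε) 0 ^ 2 < c ↔ ‖d j‖ < √c + ε := fun j ↦ by
    rw [← Real.lt_sqrt (le_max_right _ _), max_lt_iff, sub_lt_iff_lt_add]
    simp [Real.sqrt_pos.2 hc]
  simp only [hsmall]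
  let W := Submodule.span 𝕜
    (Set.range fun j : {j // ¬ ‖d j‖ < √c + ε} ↦ EuclideanSpace.basisFun n 𝕜 j)
  have hW : finrank 𝕜 W = #{j | ¬ ‖d j‖ < √c + ε} := by
    rw [finrank_span_eq_card, Fintype.card_subtype]
    exact (EuclideanSpace.basisFun n 𝕜).toBasis.linearIndependent.comp _ Subtype.val_injective
  have hsupp : ∀ w ∈ W, ∀ j, w j ≠ 0 → √c + ε ≤ ‖d j‖ := by
    intro w hw j hj
    obtain ⟨x, rfl⟩ := (Submodule.mem_span_range_iff_exists_fun 𝕜).1 hw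
    by_contra hk
    apply hj
    simp only [EuclideanSpace.basisFun_apply, WithLp.ofLp_sum, WithLp.ofLp_smul, PiLp.ofLp_single,
      Finset.sum_apply, Pi.smul_apply, smul_eq_mul]
    refine sum_eq_zero fun i _ ↦ ?_
    rw [Pi.single_apply, if_neg fun h : j = i ↦ hk (h ▸ not_lt.1 i.2), mul_zero]
  have hquad : ∀ w ∈ W, c * ‖w‖ ^ 2 ≤ re ⟪w, toEuclideanLin (Mᴴ * M) w⟫_𝕜 := by
    intro w hw
    have hε : 0 ≤ ε := (norm_nonneg E).trans hE
    have hlower := sub_mul_norm_le_norm_toEuclideanLin_diagonal_add E (by positivity) (hsupp w hw)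
    have : √c * ‖w‖ ≤ ‖toEuclideanLin M w‖ := le_trans (by gcongr; linarith) hlower
    rw [re_inner_toEuclideanLin_conjTranspose_mul_self]
    calc c * ‖w‖ ^ 2 = (√c * ‖w‖) ^ 2 := by rw [mul_pow, Real.sq_sqrt hc.le]
      _ ≤ _ := by gcongr
  have hcount := hM.card_eigenvalues_lt_add_finrank_le W hquad
  have hsplit := card_filter_add_card_filter_not (s := univ) (fun j ↦ ‖d j‖ < √c + ε)
  rw [card_univ] at hsplit
  omega

theorem prod_sq_le_prod_eigenvalues_conjTranspose_mul_self (d : n → 𝕜) {E : Matrix n n 𝕜}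
    {ε : ℝ} (hE : ‖E‖ ≤ ε) :
    ∏ j, max (‖d j‖ - ε) 0 ^ 2 ≤
      ∏ i, (isHermitian_conjTranspose_mul_self (diagonal d + E)).eigenvalues i :=
  prod_le_prod_of_card_filter_lt_le (fun _ ↦ by positivity)
    (card_eigenvalues_conjTranspose_mul_self_lt_le d hE)

end Matrix

theorem map_ofReal_submatrix_castLE_eq_diagonal {r t : ℕ} {κ : Type*} [DecidableEq κ]
    (Sig : Matrix (Fin r) (Fin t) ℝ)
    (hSdiag : ∀ (i : Fin r) (j : Fin t), (i : ℕ) ≠ (j : ℕ) → Sig i j = 0)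
    {e : κ → Fin (min r t)} (he : Function.Injective e) :
    (Sig.map Complex.ofReal).submatrix (fun i ↦ Fin.castLE (min_le_left r t) (e i))
        (fun j ↦ Fin.castLE (min_le_right r t) (e j)) =
      diagonal fun j ↦ (diagEntry Sig (e j) : ℂ) := by
  ext i j
  by_cases hij : i = j
  · subst hij
    rw [diagonal_apply_eq, submatrix_apply, Matrix.map_apply, diagEntry,
      dif_pos ⟨(e i).2.trans_le (min_le_left r t), (e i).2.trans_le (min_le_right r t)⟩]
    rfl
  · rw [diagonal_apply_ne _ hij, submatrix_apply, Matrix.map_apply,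
      hSdiag _ _ fun h ↦ hij (he (Fin.ext h)), Complex.ofReal_zero]

theorem stmt4_general (r t : ℕ)
    (Sig : Matrix (Fin r) (Fin t) ℝ)
    (hSdiag : ∀ (i : Fin r) (j : Fin t), (i : ℕ) ≠ (j : ℕ) → Sig i j = 0)
    (hSpos : ∀ j, 0 ≤ diagEntry Sig j)
    (ε : ℝ)
    (Δ : Matrix (Fin r) (Fin t) ℂ) (hΔ : specNorm Δ ≤ ε)
    (S : Finset (Fin (min r t))) :
    -- the |S|×|S| submatrix of Σ + Δ keeping rows and columns indexed by S
    let M : Matrix S S ℂ := Matrix.submatrix (Sig.map Complex.ofReal + Δ)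
      (fun i : S => Fin.castLE (min_le_left r t) i.1)
      (fun j : S => Fin.castLE (min_le_right r t) j.1)
    ((Mᴴ * M).det).im = 0 ∧
    (∏ j ∈ S, max (diagEntry Sig j - ε) 0 ^ 2) ≤ ((Mᴴ * M).det).re := by
  intro M
  set d : S → ℂ := fun j ↦ (diagEntry Sig j : ℂ)
  set E : Matrix S S ℂ := Δ.submatrix (fun i : S => Fin.castLE (min_le_left r t) i.1)
    (fun j : S => Fin.castLE (min_le_right r t) j.1)
  have hM : M = diagonal d + E := by
    rw [← map_ofReal_submatrix_castLE_eq_diagonal Sig hSdiag Subtype.val_injective]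
    rfl
  have hE : ‖E‖ ≤ ε := (l2_opNorm_submatrix_le Δ ((Fin.castLE_injective _).comp
    Subtype.val_injective) ((Fin.castLE_injective _).comp Subtype.val_injective)).trans hΔ
  have hdet : (Mᴴ * M).det =
      ((∏ i, (isHermitian_conjTranspose_mul_self (diagonal d + E)).eigenvalues i : ℝ) : ℂ) := by
    rw [hM, (isHermitian_conjTranspose_mul_self _).det_eq_prod_eigenvalues, Complex.ofReal_prod]
    rfl
  refine ⟨by rw [hdet, Complex.ofReal_im], ?_⟩
  rw [hdet, Complex.ofReal_re, ← prod_coe_sort S]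
  convert prod_sq_le_prod_eigenvalues_conjTranspose_mul_self d hE using 4 with j
  rw [Complex.norm_real, Real.norm_of_nonneg (hSpos j)]

theorem stmt4 (r t : ℕ) (hr : 0 < r) (ht : 0 < t)
    (Sig : Matrix (Fin r) (Fin t) ℝ)
    (hSdiag : ∀ (i : Fin r) (j : Fin t), (i : ℕ) ≠ (j : ℕ) → Sig i j = 0)
    (hSpos : ∀ j, 0 ≤ diagEntry Sig j)
    (ε : ℝ) (hε : 0 < ε)
    (Δ : Matrix (Fin r) (Fin t) ℂ) (hΔ : specNorm Δ ≤ ε)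
    (S : Finset (Fin (min r t))) :
    -- the |S|×|S| submatrix of Σ + Δ keeping rows and columns indexed by S
    let M : Matrix S S ℂ := Matrix.submatrix (Sig.map Complex.ofReal + Δ)
      (fun i : S => Fin.castLE (min_le_left r t) i.1)
      (fun j : S => Fin.castLE (min_le_right r t) j.1)
    ((Mᴴ * M).det).im = 0 ∧
    (∏ j ∈ S, max (diagEntry Sig j - ε) 0 ^ 2) ≤ ((Mᴴ * M).det).re :=
  stmt4_general r t Sig hSdiag hSpos ε Δ hΔ S
end

section
/- Let Σ = diag(2,1) and Λ = diag(4,3). Then for every real diagonal matrix Δ = diag(d₁,d₂) with |d₁| + |d₂| ≤ 1 one has det[I₂ + (Σ+Δ)Λ(Σ+Δ)ᵀ] = (1 + 4(2+d₁)²)(1 + 3(1+d₂)²) > 31/2. (Combined with the existence of a non-diagonal Δ of nuclear norm 1 achieving the value 31/2, this shows that the minimizer of det[I + (Σ+Δ)Λ(Σ+Δ)ᴴ] over the nuclear-norm ball {Δ : ‖σ(Δ)‖₁ ≤ 1} need not be diagonal.) -/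
open Matrix

private lemma key (a : ℝ) (h0 : 0 ≤ a) (h1 : a ≤ 1) :
    31/2 < (1 + 4*(2-a)^2) * (1 + 3*a^2) := by
  nlinarith [sq_nonneg (a^2 - 2*a), sq_nonneg (a - 1/5), mul_nonneg (sub_nonneg.2 h1) (sq_nonneg a),
    mul_nonneg (sub_nonneg.2 h1) (sq_nonneg (a-1/5)), mul_nonneg h0 (sq_nonneg (a-1)),
    mul_nonneg h0 (sq_nonneg (a-1/5))]

theorem stmt17 (d₁ d₂ : ℝ) (hd : |d₁| + |d₂| ≤ 1) :
    let Sig : Matrix (Fin 2) (Fin 2) ℝ := Matrix.diagonal ![2, 1]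
    let Lam : Matrix (Fin 2) (Fin 2) ℝ := Matrix.diagonal ![4, 3]
    let Δ : Matrix (Fin 2) (Fin 2) ℝ := Matrix.diagonal ![d₁, d₂]
    Matrix.det (1 + (Sig + Δ) * Lam * (Sig + Δ)ᵀ) =
      (1 + 4 * (2 + d₁) ^ 2) * (1 + 3 * (1 + d₂) ^ 2) ∧
    31 / 2 < Matrix.det (1 + (Sig + Δ) * Lam * (Sig + Δ)ᵀ) := by
  intro Sig Lam Δ
  have heq : Matrix.det (1 + (Sig + Δ) * Lam * (Sig + Δ)ᵀ) =
      (1 + 4 * (2 + d₁) ^ 2) * (1 + 3 * (1 + d₂) ^ 2) := by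
    simp only [Sig, Lam, Δ, Matrix.det_fin_two, Matrix.add_apply, Matrix.mul_apply,
      Matrix.transpose_apply, Matrix.one_apply, Fin.sum_univ_two, Matrix.diagonal_apply]
    norm_num
    ring
  refine ⟨heq, heq ▸ ?_⟩
  set a := |d₁| with hadef
  have h1 : -a ≤ d₁ := neg_abs_le d₁
  have h2 : -|d₂| ≤ d₂ := neg_abs_le d₂
  have ha : 0 ≤ a := abs_nonneg d₁
  have hb : 0 ≤ |d₂| := abs_nonneg d₂
  have ha1 : a ≤ 1 := by linarith
  have key1 : (1 + 4*(2-a)^2) * (1 + 3*a^2) ≤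
      (1 + 4 * (2 + d₁) ^ 2) * (1 + 3 * (1 + d₂) ^ 2) := by
    have e1 : (2-a)^2 ≤ (2+d₁)^2 := by
      apply sq_le_sq'
      · linarith
      · linarith
    have e2 : a^2 ≤ (1+d₂)^2 := by
      apply sq_le_sq'
      · linarith
      · linarith
    have p1 : (0:ℝ) ≤ 1 + 4*(2-a)^2 := by positivity
    have p2 : (0:ℝ) ≤ 1 + 3*a^2 := by positivity
    apply mul_le_mul <;> nlinarith
  calc (31:ℝ)/2 < (1 + 4*(2-a)^2) * (1 + 3*a^2) := key a ha ha1
    _ ≤ _ := key1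
end
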